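/- Let S = ℤ_p with its p-adic topology and let f ∈ C(S, ℤ_p) be the identity function f(s) = s. Then f is a non-zero-divisor in C(S, ℤ_p), but the principal ideal (f) is not closed in the p-adic topology on C(S, ℤ_p); for instance, the function s ↦ (−1)^{v_p(s)}·s (with value 0 at s = 0) lies in the closure of (f) but not in (f). -/

import Mathlib

/-!
For any `u : ℕ → ℤ_[p]` the map `x ↦ u (v_p x) * x` is `1`-Lipschitz: points of equal valuation
are moved by a factor of norm at most one, and points of different valuation are at distance the
larger of their norms. Such a map is a multiple `c * id` exactly when `u` converges, since the
cofactor must satisfy `c (p ^ n) = u n`. Truncating `u` after `n` moves the map by at most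
`p ^ (-(n + 1))`, so every such map lies in the closure of `(id)`; for `u n = (-1) ^ n` it is not
in `(id)`. Finally `id` is a non-zero-divisor because `0` is not isolated in `ℤ_[p]`.
-/

open Filter Topology

theorem not_tendsto_neg_one_pow {R : Type*} [Ring R] [TopologicalSpace R] [T2Space R]
    (h : (-1 : R) ≠ 1) (L : R) : ¬Tendsto (fun n : ℕ => (-1 : R) ^ n) atTop (𝓝 L) := by
  intro hL
  have hdouble : Tendsto (fun n : ℕ => 2 * n) atTop atTop :=
    tendsto_id.const_mul_atTop' two_pos
  have heven : Tendsto (fun n : ℕ => (-1 : R) ^ (2 * n)) atTop (𝓝 1) := by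
    simp only [pow_mul, neg_one_sq, one_pow, tendsto_const_nhds]
  have hodd : Tendsto (fun n : ℕ => (-1 : R) ^ (2 * n + 1)) atTop (𝓝 (-1)) := by
    simp_rw [pow_succ, pow_mul, neg_one_sq, one_pow, one_mul]
    exact tendsto_const_nhds
  have hL_odd := hL.comp ((tendsto_add_atTop_nat 1).comp hdouble)
  exact h <|
    (tendsto_nhds_unique hL_odd hodd).symm.trans (tendsto_nhds_unique (hL.comp hdouble) heven)

namespace PadicInt

variable {p : ℕ} [Fact p.Prime]

theorem valuation_eq_of_norm_eq {x y : ℤ_[p]} (h : ‖x‖ = ‖y‖) : x.valuation = y.valuation := by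
  rcases eq_or_ne x 0 with rfl | hx
  · rw [norm_zero, eq_comm, norm_eq_zero] at h
    rw [h]
  have hy : y ≠ 0 := by rintro rfl; exact hx (norm_eq_zero.1 (h.trans norm_zero))
  rw [norm_eq_zpow_neg_valuation hx, norm_eq_zpow_neg_valuation hy] at h
  have hp : (1 : ℝ) < p := mod_cast (Fact.out : p.Prime).one_lt
  simpa using zpow_right_injective₀ (by positivity) hp.ne' h

theorem eventually_valuation_eq {x : ℤ_[p]} (hx : x ≠ 0) :
    ∀ᶠ y in 𝓝 x, y.valuation = x.valuation := by
  have hsphere : Metric.sphere (0 : ℤ_[p]) ‖x‖ ∈ 𝓝 x :=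
    (IsUltrametricDist.isOpen_sphere 0 (norm_ne_zero_iff.2 hx)).mem_nhds (by simp)
  filter_upwards [hsphere] with y hy
  exact valuation_eq_of_norm_eq (mem_sphere_zero_iff_norm.1 hy)

theorem tendsto_valuation_nhdsNE_zero : Tendsto (valuation : ℤ_[p] → ℕ) (𝓝[≠] 0) atTop := by
  refine tendsto_atTop.2 fun n => ?_
  have hball : Metric.closedBall (0 : ℤ_[p]) ((p : ℝ) ^ (-n : ℤ)) ∈ 𝓝 0 :=
    Metric.closedBall_mem_nhds 0 (zpow_pos (mod_cast (Fact.out : p.Prime).pos) _)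
  filter_upwards [nhdsWithin_le_nhds hball, self_mem_nhdsWithin] with x hx hx0
  exact (norm_le_pow_iff_le_valuation x hx0 n).1 (mem_closedBall_zero_iff.1 hx)

theorem tendsto_p_pow_nhdsNE_zero : Tendsto (fun n : ℕ => (p : ℤ_[p]) ^ n) atTop (𝓝[≠] 0) := by
  refine tendsto_nhdsWithin_iff.2 ⟨tendsto_pow_atTop_nhds_zero_of_norm_lt_one ?_, ?_⟩
  · rw [norm_p]
    exact inv_lt_one_of_one_lt₀ (mod_cast (Fact.out : p.Prime).one_lt)
  · exact Eventually.of_forall fun n => pow_ne_zero n (mod_cast (Fact.out : p.Prime).ne_zero)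

instance : NeBot (𝓝[≠] (0 : ℤ_[p])) := tendsto_p_pow_nhdsNE_zero.neBot

theorem lipschitzWith_one_valuation_mul (u : ℕ → ℤ_[p]) :
    LipschitzWith 1 fun x : ℤ_[p] => u x.valuation * x := by
  refine LipschitzWith.of_dist_le_mul fun x y => ?_
  rw [NNReal.coe_one, one_mul, dist_eq_norm, dist_eq_norm]
  by_cases hv : x.valuation = y.valuation
  · rw [hv, ← mul_sub, norm_mul]
    exact mul_le_of_le_one_left (norm_nonneg _) (norm_le_one _)
  · have hxy : ‖x - 0‖ ≠ ‖0 - y‖ := by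
      simpa using fun h => hv (valuation_eq_of_norm_eq h)
    calc ‖u x.valuation * x - u y.valuation * y‖
        = ‖u x.valuation * x + -(u y.valuation * y)‖ := by rw [sub_eq_add_neg]
      _ ≤ max ‖u x.valuation * x‖ ‖-(u y.valuation * y)‖ := IsUltrametricDist.norm_add_le_max _ _
      _ ≤ max ‖x‖ ‖y‖ := by
        rw [norm_neg, norm_mul, norm_mul]
        gcongr <;> exact mul_le_of_le_one_left (norm_nonneg _) (norm_le_one _)
      _ = ‖x - y‖ := by
        simpa using (IsUltrametricDist.norm_sub_eq_max_of_norm_sub_ne_norm_sub x 0 y hxy).symm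

noncomputable def valuationTwist (u : ℕ → ℤ_[p]) : C(ℤ_[p], ℤ_[p]) :=
  ⟨fun x => u x.valuation * x, (lipschitzWith_one_valuation_mul u).continuous⟩

@[simp]
theorem valuationTwist_apply (u : ℕ → ℤ_[p]) (x : ℤ_[p]) :
    valuationTwist u x = u x.valuation * x :=
  rfl

open scoped Classical in
theorem continuous_ite_comp_valuation {u : ℕ → ℤ_[p]} {L : ℤ_[p]}
    (hu : Tendsto u atTop (𝓝 L)) :
    Continuous fun x : ℤ_[p] => if x = 0 then L else u x.valuation := by
  refine continuous_iff_continuousAt.2 fun x => ?_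
  rcases eq_or_ne x 0 with rfl | hx
  · rw [ContinuousAt, ← nhdsNE_sup_pure, tendsto_sup]
    refine ⟨?_, tendsto_pure_nhds _ _⟩
    rw [if_pos rfl]
    refine (hu.comp tendsto_valuation_nhdsNE_zero).congr' ?_
    filter_upwards [self_mem_nhdsWithin] with y hy
    simp [if_neg (show y ≠ 0 from hy)]
  · refine (continuousAt_const (y := u x.valuation)).congr ?_
    filter_upwards [eventually_valuation_eq hx, eventually_ne_nhds hx] with y hy hy0
    simp [hy0, hy]

theorem valuationTwist_mem_span_id_iff {u : ℕ → ℤ_[p]} :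
    valuationTwist u ∈ Ideal.span {ContinuousMap.id ℤ_[p]} ↔ ∃ L, Tendsto u atTop (𝓝 L) := by
  classical
  rw [Ideal.mem_span_singleton']
  constructor
  · rintro ⟨c, hc⟩
    have hu : u = fun n => c ((p : ℤ_[p]) ^ n) := funext fun n => by
      simpa [(Fact.out : p.Prime).ne_zero, eq_comm] using DFunLike.congr_fun hc ((p : ℤ_[p]) ^ n)
    refine ⟨c 0, ?_⟩
    rw [hu]
    exact (c.continuous.tendsto 0).comp (tendsto_p_pow_nhdsNE_zero.mono_right nhdsWithin_le_nhds)
  · rintro ⟨L, hL⟩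
    refine ⟨⟨_, continuous_ite_comp_valuation hL⟩, ?_⟩
    ext x
    by_cases hx : x = 0 <;> simp [hx]

theorem dist_valuationTwist_le {u w : ℕ → ℤ_[p]} {n : ℕ} (h : ∀ m ≤ n, u m = w m) :
    dist (valuationTwist u) (valuationTwist w) ≤ ‖(p : ℤ_[p]) ^ (n + 1)‖ := by
  refine (ContinuousMap.dist_le (norm_nonneg _)).2 fun x => ?_
  rw [dist_eq_norm, valuationTwist_apply, valuationTwist_apply, ← sub_mul]
  by_cases hx : x.valuation ≤ n
  · simp [h _ hx]
  · have hx0 : x ≠ 0 := by rintro rfl; simp at hx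
    calc ‖(u x.valuation - w x.valuation) * x‖ ≤ ‖x‖ := by
          rw [norm_mul]; exact mul_le_of_le_one_left (norm_nonneg _) (norm_le_one _)
      _ ≤ ‖(p : ℤ_[p]) ^ (n + 1)‖ := by
          rw [norm_p_pow]; exact (norm_le_pow_iff_le_valuation x hx0 _).2 (by omega)

theorem valuationTwist_mem_closure_span_id (u : ℕ → ℤ_[p]) :
    valuationTwist u ∈ closure (Ideal.span {ContinuousMap.id ℤ_[p]} : Set C(ℤ_[p], ℤ_[p])) := by
  let truncation (n : ℕ) (m : ℕ) : ℤ_[p] := u (min m n)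
  have hmem : ∀ n, valuationTwist (truncation n) ∈ Ideal.span {ContinuousMap.id ℤ_[p]} := by
    refine fun n => valuationTwist_mem_span_id_iff.2 ⟨u n, tendsto_const_nhds.congr' ?_⟩
    filter_upwards [eventually_ge_atTop n] with m hm
    simp [truncation, min_eq_right hm]
  have hbound : Tendsto (fun n => ‖(p : ℤ_[p]) ^ (n + 1)‖) atTop (𝓝 0) :=
    (tendsto_norm_zero.comp ((tendsto_p_pow_nhdsNE_zero (p := p)).mono_right
      nhdsWithin_le_nhds)).comp (tendsto_add_atTop_nat 1)
  refine mem_closure_of_tendsto (tendsto_iff_dist_tendsto_zero.2 <|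
    squeeze_zero (fun _ => dist_nonneg) (fun n => ?_) hbound) (Eventually.of_forall hmem)
  exact dist_valuationTwist_le fun m hm => by simp [truncation, min_eq_left hm]

theorem id_mem_nonZeroDivisors : ContinuousMap.id ℤ_[p] ∈ nonZeroDivisors C(ℤ_[p], ℤ_[p]) := by
  refine mem_nonZeroDivisors_iff_right.2 fun c hc => ?_
  have hzero : Set.EqOn c 0 {0}ᶜ := fun x hx => by
    have hcx := DFunLike.congr_fun hc x
    simp only [ContinuousMap.mul_apply, ContinuousMap.id_apply, ContinuousMap.zero_apply,
      mul_eq_zero] at hcx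
    exact hcx.resolve_right hx
  exact ContinuousMap.coe_injective <|
    c.continuous.ext_on (dense_compl_singleton (0 : ℤ_[p])) continuous_const hzero

end PadicInt

theorem ideal_of_identity_not_closed (p : ℕ) [Fact p.Prime] :
    (ContinuousMap.id ℤ_[p]) ∈ nonZeroDivisors C(ℤ_[p], ℤ_[p]) ∧
    ∃ g : C(ℤ_[p], ℤ_[p]),
      (∀ s : ℤ_[p], g s = (-1) ^ (s.valuation) * s) ∧
      g ∈ closure (Ideal.span {ContinuousMap.id ℤ_[p]} : Set C(ℤ_[p], ℤ_[p])) ∧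
      g ∉ Ideal.span {ContinuousMap.id ℤ_[p]} := by
  refine ⟨PadicInt.id_mem_nonZeroDivisors, PadicInt.valuationTwist fun n => (-1) ^ n, fun s => rfl,
    PadicInt.valuationTwist_mem_closure_span_id _, ?_⟩
  rw [PadicInt.valuationTwist_mem_span_id_iff]
  rintro ⟨L, hL⟩
  exact not_tendsto_neg_one_pow (by norm_num) L hL
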